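/- Let I be an interval of ℝ and φ₀, φ₁ : I → I strictly increasing contractive maps with fixed points y₁ < y₀. Fix x ∈ [y₁, y₀] and define the x-threshold orbit by x_1 = φ₁(x), and x_{k+1} = φ₁(x_k) if x_k ≥ x, x_{k+1} = φ₀(x_k) if x_k < x. Then for all k ∈ ℕ: φ₁(x) ≤ x_k < φ₀(x). -/

import Mathlib

/-!
Each map only moves points towards its own fixed point, so `φ₁ z ≤ z` above `x ≥ y₁` and
`z < φ₀ z` below `x ≤ y₀`. Hence the threshold step maps `[φ₁ x, φ₀ x)` into itself: above the
threshold `φ₁` moves a point down but, being monotone, not below `φ₁ x`; below it `φ₀` moves a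
point up but, being strictly monotone, not up to `φ₀ x`. The orbit starts in this interval,
which is nonempty because `y₁ < y₀` makes one of `φ₁ x ≤ x ≤ φ₀ x` strict.
-/

open Set Function

def ContractiveOn (f : ℝ → ℝ) (s : Set ℝ) : Prop :=
  ∀ x ∈ s, ∀ y ∈ s, x < y → f y - f x < y - x

namespace ContractiveOn

variable {f : ℝ → ℝ} {s : Set ℝ} {p z : ℝ}

theorem map_lt_of_isFixedPt_lt (hf : ContractiveOn f s) (hp : p ∈ s) (hfp : IsFixedPt f p)
    (hz : z ∈ s) (h : p < z) : f z < z := by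
  have := hf p hp z hz h
  rw [hfp.eq] at this
  linarith

theorem map_le_of_isFixedPt_le (hf : ContractiveOn f s) (hp : p ∈ s) (hfp : IsFixedPt f p)
    (hz : z ∈ s) (h : p ≤ z) : f z ≤ z := by
  rcases h.eq_or_lt with rfl | h
  · exact hfp.eq.le
  · exact (hf.map_lt_of_isFixedPt_lt hp hfp hz h).le

theorem lt_map_of_lt_isFixedPt (hf : ContractiveOn f s) (hp : p ∈ s) (hfp : IsFixedPt f p)
    (hz : z ∈ s) (h : z < p) : z < f z := by
  have := hf z hz p hp h
  rw [hfp.eq] at this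
  linarith

theorem map_lt_map_of_mem_Icc {g : ℝ → ℝ} {q x : ℝ} (hf : ContractiveOn f s)
    (hg : ContractiveOn g s) (hp : p ∈ s) (hq : q ∈ s) (hfp : IsFixedPt f p)
    (hgq : IsFixedPt g q) (hpq : p < q) (hx : x ∈ s) (hpx : p ≤ x) (hxq : x ≤ q) :
    f x < g x := by
  rcases hxq.eq_or_lt with rfl | hxq
  · rw [hgq.eq]
    exact hf.map_lt_of_isFixedPt_lt hp hfp hx hpq
  · exact (hf.map_le_of_isFixedPt_le hp hfp hx hpx).trans_lt
      (hg.lt_map_of_lt_isFixedPt hq hgq hx hxq)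

end ContractiveOn

noncomputable def thresholdStep (φ0 φ1 : ℝ → ℝ) (x z : ℝ) : ℝ :=
  if x ≤ z then φ1 z else φ0 z

theorem thresholdStep_mapsTo_Ico {I : Set ℝ} {φ0 φ1 : ℝ → ℝ} {x : ℝ} (hxI : x ∈ I)
    (hsub : Ico (φ1 x) (φ0 x) ⊆ I) (h0 : StrictMonoOn φ0 I) (h1 : MonotoneOn φ1 I)
    (hφ0 : ∀ z ∈ I, z < x → z < φ0 z) (hφ1 : ∀ z ∈ I, x ≤ z → φ1 z ≤ z) :
    MapsTo (thresholdStep φ0 φ1 x) (Ico (φ1 x) (φ0 x)) (Ico (φ1 x) (φ0 x)) := by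
  rintro z ⟨hlo, hhi⟩
  have hzI := hsub ⟨hlo, hhi⟩
  unfold thresholdStep
  split_ifs with hxz
  · exact ⟨h1 hxI hzI hxz, (hφ1 z hzI hxz).trans_lt hhi⟩
  · have hzx := not_le.1 hxz
    exact ⟨hlo.trans (hφ0 z hzI hzx).le, h0 hzI hxI hzx⟩

theorem stmt_11_general (I : Set ℝ) (hI : I.OrdConnected) (φ0 φ1 : ℝ → ℝ)
    (h0inc : ∀ x ∈ I, ∀ y ∈ I, x < y → φ0 x < φ0 y)
    (h1inc : ∀ x ∈ I, ∀ y ∈ I, x < y → φ1 x < φ1 y)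
    (h0contr : ∀ x ∈ I, ∀ y ∈ I, x < y → φ0 y - φ0 x < y - x)
    (h1contr : ∀ x ∈ I, ∀ y ∈ I, x < y → φ1 y - φ1 x < y - x)
    (y0 y1 : ℝ) (hy0I : y0 ∈ I) (hy1I : y1 ∈ I)
    (hfix0 : φ0 y0 = y0)
    (hfix1 : φ1 y1 = y1)
    (hlt : y1 < y0)
    (x : ℝ) (hx : x ∈ Set.Icc y1 y0)
    (X : ℕ → ℝ) (hX1 : X 1 = φ1 x)
    (hXs : ∀ k, 1 ≤ k → X (k + 1) = if x ≤ X k then φ1 (X k) else φ0 (X k)) :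
    ∀ k, 1 ≤ k → φ1 x ≤ X k ∧ X k < φ0 x := by
  obtain ⟨hy1x, hxy0⟩ := hx
  have h0 : StrictMonoOn φ0 I := h0inc
  have h1 : StrictMonoOn φ1 I := h1inc
  have hxI : x ∈ I := hI.out hy1I hy0I ⟨hy1x, hxy0⟩
  have hsub : Ico (φ1 x) (φ0 x) ⊆ I := by
    refine Ico_subset_Icc_self.trans ((Icc_subset_Icc ?_ ?_).trans (hI.out hy1I hy0I))
    · exact hfix1 ▸ h1.monotoneOn hy1I hxI hy1x
    · exact hfix0 ▸ h0.monotoneOn hxI hy0I hxy0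
  have hinv := thresholdStep_mapsTo_Ico hxI hsub h0 h1.monotoneOn
    (fun z hz hzx => ContractiveOn.lt_map_of_lt_isFixedPt h0contr hy0I hfix0 hz
      (hzx.trans_le hxy0))
    (fun z hz hxz => ContractiveOn.map_le_of_isFixedPt_le h1contr hy1I hfix1 hz (hy1x.trans hxz))
  have hstart : φ1 x < φ0 x :=
    ContractiveOn.map_lt_map_of_mem_Icc h1contr h0contr hy1I hy0I hfix1 hfix0 hlt hxI hy1x hxy0
  intro k hk
  induction k, hk using Nat.le_induction with
  | base => rw [hX1]; exact left_mem_Ico.2 hstart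
  | succ n hn ih => rw [hXs n hn]; exact hinv ih

/-- Under Assumption A1, fix `x ∈ [y₁, y₀]` and let `(X k)_{k≥1}` be the
`x`-threshold orbit: `X 1 = φ₁ x`, and `X (k+1) = φ₁ (X k)` if `X k ≥ x`, else
`X (k+1) = φ₀ (X k)`.  Then for all `k ≥ 1`: `φ₁ x ≤ X k < φ₀ x`. -/
theorem stmt_11 (I : Set ℝ) (hI : I.OrdConnected) (φ0 φ1 : ℝ → ℝ)
    (h0maps : Set.MapsTo φ0 I I) (h1maps : Set.MapsTo φ1 I I)
    (h0inc : ∀ x ∈ I, ∀ y ∈ I, x < y → φ0 x < φ0 y)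
    (h1inc : ∀ x ∈ I, ∀ y ∈ I, x < y → φ1 x < φ1 y)
    (h0contr : ∀ x ∈ I, ∀ y ∈ I, x < y → φ0 y - φ0 x < y - x)
    (h1contr : ∀ x ∈ I, ∀ y ∈ I, x < y → φ1 y - φ1 x < y - x)
    (y0 y1 : ℝ) (hy0I : y0 ∈ I) (hy1I : y1 ∈ I)
    (hfix0 : φ0 y0 = y0) (huniq0 : ∀ z ∈ I, φ0 z = z → z = y0)
    (hfix1 : φ1 y1 = y1) (huniq1 : ∀ z ∈ I, φ1 z = z → z = y1)
    (hlt : y1 < y0)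
    (x : ℝ) (hx : x ∈ Set.Icc y1 y0)
    (X : ℕ → ℝ) (hX1 : X 1 = φ1 x)
    (hXs : ∀ k, 1 ≤ k → X (k + 1) = if x ≤ X k then φ1 (X k) else φ0 (X k)) :
    ∀ k, 1 ≤ k → φ1 x ≤ X k ∧ X k < φ0 x :=
  stmt_11_general I hI φ0 φ1 h0inc h1inc h0contr h1contr y0 y1 hy0I hy1I hfix0 hfix1 hlt x hx X hX1
    hXs
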